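/- Given ε > 0, every rational polytope P in ℝⁿ can be written as a finite union of rational polytopes P₁, …, P_k such that each Pᵢ has the same dimension as P, each Pᵢ has diameter at most ε, and the relative interiors of the Pᵢ are pairwise disjoint. -/

import Mathlib

open Set Metric
/-- A rational polytope in `ℝⁿ`: the convex hull of finitely many points with
rational coordinates. -/
def IsRatPolytope {n : ℕ} (P : Set (Fin n → ℝ)) : Prop :=
  ∃ (k : ℕ) (v : Fin k → Fin n → ℝ), (∀ i j, ∃ q : ℚ, v i j = q) ∧
    P = convexHull ℝ (Set.range v)
def RatVec {n : ℕ} (x : Fin n → ℝ) : Prop := ∀ j, ∃ q : ℚ, x j = q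
namespace RatCut
variable {n : ℕ}
noncomputable def crossT (f : (Fin n → ℝ) →ₗ[ℝ] ℝ) (a : ℝ) (u w : Fin n → ℝ) : ℝ :=
  (a - f u) / (f w - f u)
noncomputable def crossPt (f : (Fin n → ℝ) →ₗ[ℝ] ℝ) (a : ℝ) (u w : Fin n → ℝ) : Fin n → ℝ :=
  (1 - crossT f a u w) • u + crossT f a u w • w
lemma crossT_pos {f : (Fin n → ℝ) →ₗ[ℝ] ℝ} {a : ℝ} {u w : Fin n → ℝ}
    (hu : f u < a) (hw : a < f w) : 0 < crossT f a u w :=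
  div_pos (by linarith) (by linarith)
lemma crossT_lt_one {f : (Fin n → ℝ) →ₗ[ℝ] ℝ} {a : ℝ} {u w : Fin n → ℝ}
    (hu : f u < a) (hw : a < f w) : crossT f a u w < 1 :=
  (div_lt_one (by linarith)).2 (by linarith)
lemma f_crossPt {f : (Fin n → ℝ) →ₗ[ℝ] ℝ} {a : ℝ} {u w : Fin n → ℝ}
    (hu : f u < a) (hw : a < f w) : f (crossPt f a u w) = a := by
  have hne : f w - f u ≠ 0 := by linarith
  simp only [crossPt, map_add, map_smul, smul_eq_mul]
  have : crossT f a u w * (f w - f u) = a - f u := div_mul_cancel₀ _ hne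
  nlinarith [this]
noncomputable def cutSet (S : Finset (Fin n → ℝ)) (f : (Fin n → ℝ) →ₗ[ℝ] ℝ) (a : ℝ) :
    Finset (Fin n → ℝ) :=
  letI := Classical.decEq (Fin n → ℝ)
  letI : DecidablePred fun v : Fin n → ℝ => f v ≤ a := fun _ => Classical.dec _
  letI : DecidablePred fun p : (Fin n → ℝ) × (Fin n → ℝ) => f p.1 < a ∧ a < f p.2 :=
    fun _ => Classical.dec _
  S.filter (fun v => f v ≤ a) ∪
    ((S ×ˢ S).filter (fun p => f p.1 < a ∧ a < f p.2)).image (fun p => crossPt f a p.1 p.2)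
lemma mem_cutSet_of_le {S : Finset (Fin n → ℝ)} {f : (Fin n → ℝ) →ₗ[ℝ] ℝ} {a : ℝ}
    {v : Fin n → ℝ} (hv : v ∈ S) (h : f v ≤ a) : v ∈ cutSet S f a := by
  classical
  simp only [cutSet, Finset.mem_union, Finset.mem_filter]
  exact Or.inl ⟨hv, by convert h⟩
lemma crossPt_mem_cutSet {S : Finset (Fin n → ℝ)} {f : (Fin n → ℝ) →ₗ[ℝ] ℝ} {a : ℝ}
    {u w : Fin n → ℝ} (hu : u ∈ S) (hw : w ∈ S) (hu' : f u < a) (hw' : a < f w) :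
    crossPt f a u w ∈ cutSet S f a := by
  classical
  simp only [cutSet, Finset.mem_union, Finset.mem_image, Finset.mem_filter, Finset.mem_product]
  right
  exact ⟨(u, w), ⟨⟨hu, hw⟩, hu', hw'⟩, rfl⟩
lemma cutSet_subset {S : Finset (Fin n → ℝ)} {f : (Fin n → ℝ) →ₗ[ℝ] ℝ} {a : ℝ} :
    (cutSet S f a : Set (Fin n → ℝ)) ⊆ convexHull ℝ (S : Set (Fin n → ℝ)) ∩ {x | f x ≤ a} := by
  classical
  intro x hx
  simp only [cutSet, Finset.coe_union, Set.mem_union, Finset.coe_filter, Finset.coe_image,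
    Set.mem_image, Set.mem_setOf_eq, Finset.mem_filter, Finset.mem_product] at hx
  rcases hx with ⟨hxS, hxa⟩ | ⟨⟨u, w⟩, ⟨⟨huS, hwS⟩, hu, hw⟩, rfl⟩
  · exact ⟨subset_convexHull ℝ _ hxS, hxa⟩
  · constructor
    · have h1 : (u : Fin n → ℝ) ∈ convexHull ℝ (S : Set (Fin n → ℝ)) := subset_convexHull ℝ _ huS
      have h2 : (w : Fin n → ℝ) ∈ convexHull ℝ (S : Set (Fin n → ℝ)) := subset_convexHull ℝ _ hwS
      exact (convex_convexHull ℝ _) h1 h2 (by linarith [crossT_lt_one hu hw])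
        (le_of_lt (crossT_pos hu hw)) (by ring)
    · exact le_of_eq (f_crossPt hu hw)

lemma cut_done (S : Finset (Fin n → ℝ)) (f : (Fin n → ℝ) →ₗ[ℝ] ℝ) (a : ℝ)
    (F : Finset (Fin n → ℝ)) (w : (Fin n → ℝ) → ℝ)
    (hinv : ∀ v ∈ F, v ∈ (S : Set (Fin n → ℝ)) ∨
      (f v = a ∧ v ∈ convexHull ℝ (cutSet S f a : Set (Fin n → ℝ))))
    (hnn : ∀ v ∈ F, 0 ≤ w v) (hw1 : ∑ v ∈ F, w v = 1)
    (hle : ∀ v ∈ F, w v ≠ 0 → f v ≤ a) :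
    (∑ v ∈ F, w v • v) ∈ convexHull ℝ (cutSet S f a : Set (Fin n → ℝ)) := by
  classical
  have h1 : ∑ v ∈ F.filter (fun v => w v ≠ 0), w v • v = ∑ v ∈ F, w v • v :=
    Finset.sum_filter_of_ne (fun x _ hne h0 => hne (by rw [h0, zero_smul]))
  have h2 : ∑ v ∈ F.filter (fun v => w v ≠ 0), w v = 1 := by
    rw [Finset.sum_filter_of_ne (fun x _ hne => hne)]; exact hw1
  rw [← h1]
  refine (convex_convexHull ℝ _).sum_mem (fun v hv => hnn v (Finset.mem_filter.1 hv).1) h2 ?_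
  intro v hv
  obtain ⟨hvF, hvn⟩ := Finset.mem_filter.1 hv
  rcases hinv v hvF with hvS | ⟨_, hvh⟩
  · exact subset_convexHull ℝ _ (mem_cutSet_of_le hvS (hle v hvF hvn))
  · exact hvh

lemma cut_aux (S : Finset (Fin n → ℝ)) (f : (Fin n → ℝ) →ₗ[ℝ] ℝ) (a : ℝ) :
    ∀ (N : ℕ) (F : Finset (Fin n → ℝ)) (w : (Fin n → ℝ) → ℝ),
      (∀ v ∈ F, v ∈ (S : Set (Fin n → ℝ)) ∨
        (f v = a ∧ v ∈ convexHull ℝ (cutSet S f a : Set (Fin n → ℝ)))) →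
      (∀ v, v ∉ F → w v = 0) →
      (∀ v ∈ F, 0 ≤ w v) →
      (∑ v ∈ F, w v) = 1 →
      f (∑ v ∈ F, w v • v) ≤ a →
      (F.filter (fun v => w v ≠ 0 ∧ f v ≠ a)).card ≤ N →
      (∑ v ∈ F, w v • v) ∈ convexHull ℝ (cutSet S f a : Set (Fin n → ℝ)) := by
  classical
  intro N
  induction N with
  | zero =>
    intro F w hinv hzero hnn hw1 hfa hcard
    refine cut_done S f a F w hinv hnn hw1 ?_
    intro v hvF hvn
    by_contra hlt
    push_neg at hlt
    have hvfilter : v ∈ F.filter (fun v => w v ≠ 0 ∧ f v ≠ a) :=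
      Finset.mem_filter.2 ⟨hvF, hvn, ne_of_gt hlt⟩
    have := Finset.card_pos.2 ⟨v, hvfilter⟩
    omega
  | succ N ih =>
    intro F w hinv hzero hnn hw1 hfa hcard
    by_cases hbad : ∃ v ∈ F, w v ≠ 0 ∧ a < f v
    · obtain ⟨w₀, hw₀F, hw₀n, hw₀a⟩ := hbad
      have hw₀pos : 0 < w w₀ := lt_of_le_of_ne (hnn w₀ hw₀F) (Ne.symm hw₀n)
      -- find a vertex strictly below the hyperplane
      have hfsum : f (∑ v ∈ F, w v • v) = ∑ v ∈ F, w v * f v := by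
        rw [map_sum]; simp [map_smul]
      have hu : ∃ u ∈ F, w u ≠ 0 ∧ f u < a := by
        by_contra hns
        push_neg at hns
        have h1 : ∑ v ∈ F, w v * a < ∑ v ∈ F, w v * f v := by
          apply Finset.sum_lt_sum
          · intro i hi
            by_cases hwi : w i = 0
            · simp [hwi]
            · exact mul_le_mul_of_nonneg_left (hns i hi hwi) (hnn i hi)
          · exact ⟨w₀, hw₀F, mul_lt_mul_of_pos_left hw₀a hw₀pos⟩
        rw [← Finset.sum_mul, hw1, one_mul] at h1
        rw [hfsum] at hfa
        linarith
      obtain ⟨u, huF, hun, hua⟩ := hu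
      have hupos : 0 < w u := lt_of_le_of_ne (hnn u huF) (Ne.symm hun)
      have huS : u ∈ S := by
        rcases hinv u huF with h | h
        · exact h
        · exact absurd h.1 (ne_of_lt hua)
      have hw₀S : w₀ ∈ S := by
        rcases hinv w₀ hw₀F with h | h
        · exact h
        · exact absurd h.1 (ne_of_gt hw₀a)
      set t := crossT f a u w₀ with htdef
      have ht0 : 0 < t := crossT_pos hua hw₀a
      have ht1 : t < 1 := crossT_lt_one hua hw₀a
      set c := crossPt f a u w₀ with hcdef
      have hfc : f c = a := f_crossPt hua hw₀a
      have hcC : c ∈ cutSet S f a := crossPt_mem_cutSet huS hw₀S hua hw₀a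
      have hcu : c ≠ u := by intro h; rw [h] at hfc; exact (ne_of_lt hua) hfc
      have hcw₀ : c ≠ w₀ := by intro h; rw [h] at hfc; exact (ne_of_gt hw₀a) hfc
      have huw₀ : u ≠ w₀ := by intro h; rw [h] at hua; exact absurd hua (asymm hw₀a)
      set γ := min (w u / (1 - t)) (w w₀ / t) with hγdef
      have hγpos : 0 < γ := lt_min (div_pos hupos (by linarith)) (div_pos hw₀pos ht0)
      have hγu : γ * (1 - t) ≤ w u := by
        have h := min_le_left (w u / (1 - t)) (w w₀ / t)
        calc γ * (1 - t) ≤ (w u / (1 - t)) * (1 - t) := by nlinarith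
        _ = w u := div_mul_cancel₀ _ (by linarith)
      have hγw₀ : γ * t ≤ w w₀ := by
        have h := min_le_right (w u / (1 - t)) (w w₀ / t)
        calc γ * t ≤ (w w₀ / t) * t := by nlinarith
        _ = w w₀ := div_mul_cancel₀ _ (by linarith)
      set w' : (Fin n → ℝ) → ℝ := fun v =>
        w v + (if v = c then γ else 0) - (if v = u then γ * (1 - t) else 0)
          - (if v = w₀ then γ * t else 0) with hw'def
      set F' : Finset (Fin n → ℝ) := insert c F with hF'def
      have huF' : u ∈ F' := Finset.mem_insert_of_mem huF
      have hw₀F' : w₀ ∈ F' := Finset.mem_insert_of_mem hw₀F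
      have hcF' : c ∈ F' := Finset.mem_insert_self c F
      have hwsumF' : ∑ v ∈ F', w v = 1 := by
        by_cases hcF : c ∈ F
        · rw [hF'def, Finset.insert_eq_self.2 hcF]; exact hw1
        · rw [hF'def, Finset.sum_insert hcF, hzero c hcF, zero_add]; exact hw1
      have hvecF' : ∑ v ∈ F', w v • v = ∑ v ∈ F, w v • v := by
        by_cases hcF : c ∈ F
        · rw [hF'def, Finset.insert_eq_self.2 hcF]
        · rw [hF'def, Finset.sum_insert hcF, hzero c hcF, zero_smul, zero_add]
      have hite : ∀ (x : Fin n → ℝ), x ∈ F' → ∀ b : ℝ,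
          ∑ v ∈ F', (if v = x then b else 0) = b := by
        intro x hx b
        rw [Finset.sum_ite_eq' F' x (fun _ => b), if_pos hx]
      have hsum' : ∑ v ∈ F', w' v = 1 := by
        simp only [hw'def]
        rw [Finset.sum_sub_distrib, Finset.sum_sub_distrib, Finset.sum_add_distrib,
          hwsumF', hite c hcF' γ, hite u huF' _, hite w₀ hw₀F' _]
        ring
      have hitev : ∀ (x : Fin n → ℝ), x ∈ F' → ∀ b : ℝ,
          ∑ v ∈ F', (if v = x then b else 0) • v = b • x := by
        intro x hx b
        have he : ∀ v : Fin n → ℝ, (if v = x then b else 0) • v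
            = (if v = x then b • x else 0) := by
          intro v; by_cases h : v = x <;> simp [h]
        simp_rw [he]
        rw [Finset.sum_ite_eq' F' x (fun _ => b • x), if_pos hx]
      have hvec' : ∑ v ∈ F', w' v • v = ∑ v ∈ F, w v • v := by
        simp only [hw'def]
        simp_rw [sub_smul, add_smul]
        rw [Finset.sum_sub_distrib, Finset.sum_sub_distrib, Finset.sum_add_distrib,
          hvecF', hitev c hcF' γ, hitev u huF' _, hitev w₀ hw₀F' _]
        have hc : γ • c = (γ * (1 - t)) • u + (γ * t) • w₀ := by
          rw [hcdef]
          simp only [crossPt, ← htdef, smul_add, smul_smul]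
        rw [hc]; abel
      have hinv' : ∀ v ∈ F', v ∈ (S : Set (Fin n → ℝ)) ∨
          (f v = a ∧ v ∈ convexHull ℝ (cutSet S f a : Set (Fin n → ℝ))) := by
        intro v hv
        rcases Finset.mem_insert.1 hv with rfl | hvF
        · exact Or.inr ⟨hfc, subset_convexHull ℝ _ hcC⟩
        · exact hinv v hvF
      have hzero' : ∀ v, v ∉ F' → w' v = 0 := by
        intro v hv
        have hvF : v ∉ F := fun h => hv (Finset.mem_insert_of_mem h)
        have hvc : v ≠ c := fun h => hv (h ▸ hcF')
        have hvu : v ≠ u := fun h => hvF (h ▸ huF)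
        have hvw₀ : v ≠ w₀ := fun h => hvF (h ▸ hw₀F)
        simp [hw'def, if_neg hvc, if_neg hvu, if_neg hvw₀, hzero v hvF]
      have hwc : 0 ≤ w c := by
        by_cases hcF : c ∈ F
        · exact hnn c hcF
        · rw [hzero c hcF]
      have hnn' : ∀ v ∈ F', 0 ≤ w' v := by
        intro v hv
        by_cases hvc : v = c
        · subst hvc
          simp only [hw'def, if_pos rfl, if_true, eq_self_iff_true, if_neg hcu, if_neg hcw₀]
          linarith
        by_cases hvu : v = u
        · subst hvu
          simp only [hw'def, if_neg (fun h => hvc h), if_pos rfl, if_true, eq_self_iff_true, if_neg huw₀]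
          linarith
        by_cases hvw₀ : v = w₀
        · subst hvw₀
          simp only [hw'def, if_neg hvc, if_neg hvu, if_pos rfl, if_true, eq_self_iff_true]
          linarith
        · have hvF : v ∈ F := (Finset.mem_insert.1 hv).resolve_left hvc
          simp only [hw'def, if_neg hvc, if_neg hvu, if_neg hvw₀]
          have := hnn v hvF
          linarith
      have hfa' : f (∑ v ∈ F', w' v • v) ≤ a := by rw [hvec']; exact hfa
      -- cardinality decreases
      have hcard' : (F'.filter (fun v => w' v ≠ 0 ∧ f v ≠ a)).card ≤ N := by
        rcases le_total (w u / (1 - t)) (w w₀ / t) with hmin | hmin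
        · have hγeq : γ = w u / (1 - t) := min_eq_left hmin
          have hw'u : w' u = 0 := by
            simp only [hw'def, if_neg (Ne.symm hcu), if_pos rfl, if_true, eq_self_iff_true,
              if_neg huw₀, hγeq, div_mul_cancel₀ _ (show (1:ℝ) - t ≠ 0 by linarith)]
            ring
          have hsub : F'.filter (fun v => w' v ≠ 0 ∧ f v ≠ a) ⊆
              (F.filter (fun v => w v ≠ 0 ∧ f v ≠ a)).erase u := by
            intro v hv
            obtain ⟨hvF', hvn, hvfa⟩ := Finset.mem_filter.1 hv
            have hvc : v ≠ c := fun h => hvfa (h ▸ hfc)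
            have hvF : v ∈ F := (Finset.mem_insert.1 hvF').resolve_left hvc
            have hvu : v ≠ u := fun h => hvn (h ▸ hw'u)
            refine Finset.mem_erase.2 ⟨hvu, Finset.mem_filter.2 ⟨hvF, ?_, hvfa⟩⟩
            by_cases hvw₀ : v = w₀
            · subst hvw₀; exact hw₀n
            · intro h0
              apply hvn
              simp only [hw'def, if_neg hvc, if_neg hvu, if_neg hvw₀, h0]
              ring
          have humem : u ∈ F.filter (fun v => w v ≠ 0 ∧ f v ≠ a) :=
            Finset.mem_filter.2 ⟨huF, hun, ne_of_lt hua⟩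
          have h1 := Finset.card_le_card hsub
          rw [Finset.card_erase_of_mem humem] at h1
          omega
        · have hγeq : γ = w w₀ / t := min_eq_right hmin
          have hw'w₀ : w' w₀ = 0 := by
            simp only [hw'def, if_neg (Ne.symm hcw₀), if_neg (Ne.symm huw₀), if_pos rfl, if_true,
              eq_self_iff_true, hγeq, div_mul_cancel₀ _ (ne_of_gt ht0)]
            ring
          have hsub : F'.filter (fun v => w' v ≠ 0 ∧ f v ≠ a) ⊆
              (F.filter (fun v => w v ≠ 0 ∧ f v ≠ a)).erase w₀ := by
            intro v hv
            obtain ⟨hvF', hvn, hvfa⟩ := Finset.mem_filter.1 hv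
            have hvc : v ≠ c := fun h => hvfa (h ▸ hfc)
            have hvF : v ∈ F := (Finset.mem_insert.1 hvF').resolve_left hvc
            have hvw₀ : v ≠ w₀ := fun h => hvn (h ▸ hw'w₀)
            refine Finset.mem_erase.2 ⟨hvw₀, Finset.mem_filter.2 ⟨hvF, ?_, hvfa⟩⟩
            by_cases hvu : v = u
            · subst hvu; exact hun
            · intro h0
              apply hvn
              simp only [hw'def, if_neg hvc, if_neg hvu, if_neg hvw₀, h0]
              ring
          have hw₀mem : w₀ ∈ F.filter (fun v => w v ≠ 0 ∧ f v ≠ a) :=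
            Finset.mem_filter.2 ⟨hw₀F, hw₀n, ne_of_gt hw₀a⟩
          have h1 := Finset.card_le_card hsub
          rw [Finset.card_erase_of_mem hw₀mem] at h1
          omega
      have := ih F' w' hinv' hzero' hnn' hsum' hfa' hcard'
      rwa [hvec'] at this
    · push_neg at hbad
      exact cut_done S f a F w hinv hnn hw1 (fun v hv hvn => hbad v hv hvn)


lemma convexHull_cutSet (S : Finset (Fin n → ℝ)) (f : (Fin n → ℝ) →ₗ[ℝ] ℝ) (a : ℝ) :
    convexHull ℝ (cutSet S f a : Set (Fin n → ℝ)) =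
      convexHull ℝ (S : Set (Fin n → ℝ)) ∩ {x | f x ≤ a} := by
  classical
  apply Set.Subset.antisymm
  · exact convexHull_min cutSet_subset
      ((convex_convexHull ℝ _).inter (convex_halfSpace_le f.isLinear a))
  · rintro x ⟨hxS, hxa⟩
    rw [Finset.convexHull_eq] at hxS
    obtain ⟨w, hw0, hw1, hwx⟩ := hxS
    have hwx' : ∑ v ∈ S, w v • v = x := by
      rw [← Finset.centerMass_eq_of_sum_1 _ _ hw1]; exact hwx
    set w' : (Fin n → ℝ) → ℝ := fun v => if v ∈ S then w v else 0 with hw'def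
    have hsum : ∑ v ∈ S, w' v = 1 := by
      rw [Finset.sum_congr rfl (fun v hv => if_pos hv)]; exact hw1
    have hcg : ∀ v ∈ S, w' v • v = w v • v := fun v hv => by
      simp only [hw'def]; rw [if_pos hv]
    have hx : ∑ v ∈ S, w' v • v = x := by rw [Finset.sum_congr rfl hcg]; exact hwx'
    have hres := cut_aux S f a (S.filter (fun v => w' v ≠ 0 ∧ f v ≠ a)).card S w'
      (fun v hv => Or.inl hv)
      (fun v hv => if_neg hv)
      (fun v hv => by rw [hw'def]; simp only [if_pos hv]; exact hw0 v hv)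
      hsum (by rw [hx]; exact hxa) le_rfl
    rwa [hx] at hres

lemma ratVec_cutSet {S : Finset (Fin n → ℝ)} {f : (Fin n → ℝ) →ₗ[ℝ] ℝ} {a : ℝ}
    (hS : ∀ x ∈ S, RatVec x) (hf : ∀ x, RatVec x → ∃ q : ℚ, f x = q)
    (ha : ∃ q : ℚ, a = q) : ∀ x ∈ cutSet S f a, RatVec x := by
  classical
  intro x hx
  simp only [cutSet, Finset.mem_union, Finset.mem_image, Finset.mem_filter,
    Finset.mem_product] at hx
  rcases hx with ⟨hxS, _⟩ | ⟨⟨u, w⟩, ⟨⟨huS, hwS⟩, hu, hw⟩, rfl⟩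
  · exact hS x hxS
  · obtain ⟨qa, rfl⟩ := ha
    obtain ⟨qu, hqu⟩ := hf u (hS u huS)
    obtain ⟨qw, hqw⟩ := hf w (hS w hwS)
    intro j
    obtain ⟨qju, hqju⟩ := hS u huS j
    obtain ⟨qjw, hqjw⟩ := hS w hwS j
    refine ⟨(1 - (qa - qu) / (qw - qu)) * qju + (qa - qu) / (qw - qu) * qjw, ?_⟩
    have hne : (qw : ℝ) - qu ≠ 0 := by rw [← hqu, ← hqw]; dsimp at hu hw ⊢; linarith
    have hne' : qw - qu ≠ 0 := by
      intro h0
      apply hne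
      have : ((qw - qu : ℚ) : ℝ) = 0 := by rw [h0]; simp
      push_cast at this; linarith
    simp only [crossPt, crossT, Pi.add_apply, Pi.smul_apply, smul_eq_mul, hqu, hqw, hqju, hqjw]
    push_cast
    rfl

lemma hull_inter_list (S : Finset (Fin n → ℝ)) (hS : ∀ x ∈ S, RatVec x)
    (L : List (((Fin n → ℝ) →ₗ[ℝ] ℝ) × ℝ))
    (hL : ∀ p ∈ L, (∀ x, RatVec x → ∃ q : ℚ, p.1 x = q) ∧ ∃ q : ℚ, p.2 = q) :
    ∃ T : Finset (Fin n → ℝ), (∀ x ∈ T, RatVec x) ∧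
      convexHull ℝ (T : Set (Fin n → ℝ)) =
        convexHull ℝ (S : Set (Fin n → ℝ)) ∩ {x | ∀ p ∈ L, p.1 x ≤ p.2} := by
  induction L generalizing S with
  | nil =>
    refine ⟨S, hS, ?_⟩
    simp
  | cons p L ihL =>
    have hp := hL p List.mem_cons_self
    have hT₁ := ratVec_cutSet hS hp.1 hp.2
    have hhull₁ := convexHull_cutSet S p.1 p.2
    set T₁ := cutSet S p.1 p.2 with hT₁def
    obtain ⟨T, hT, hhull⟩ := ihL T₁ hT₁ (fun q hq => hL q (List.mem_cons_of_mem p hq))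
    refine ⟨T, hT, ?_⟩
    rw [hhull, hhull₁]
    ext x
    simp only [Set.mem_inter_iff, Set.mem_setOf_eq, List.mem_cons]
    constructor
    · rintro ⟨⟨hxS, hxp⟩, hxL⟩
      exact ⟨hxS, fun q hq => by rcases hq with rfl | hq; exact hxp; exact hxL q hq⟩
    · rintro ⟨hxS, hx⟩
      exact ⟨⟨hxS, hx p (Or.inl rfl)⟩, fun q hq => hx q (Or.inr hq)⟩


/-! ### Cubes -/

def cube (δ : ℝ) (z : Fin n → ℤ) : Set (Fin n → ℝ) :=
  {x | ∀ j, δ * z j ≤ x j ∧ x j ≤ δ * (z j + 1)}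

lemma cube_eq_closedBall {δ : ℝ} (hδ : 0 < δ) (z : Fin n → ℤ) :
    cube δ z = Metric.closedBall (fun j => δ * z j + δ / 2) (δ / 2) := by
  ext x
  rw [Metric.mem_closedBall, dist_pi_le_iff (by linarith)]
  apply forall_congr'
  intro j
  rw [Real.dist_eq, abs_le]
  constructor
  · rintro ⟨h1, h2⟩; constructor <;> [skip; skip] <;> push_cast <;> linarith
  · rintro ⟨h1, h2⟩; constructor <;> push_cast at h1 h2 ⊢ <;> linarith

lemma diam_cube {δ : ℝ} (hδ : 0 < δ) (z : Fin n → ℤ) : Metric.diam (cube δ z) ≤ δ := by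
  rw [cube_eq_closedBall hδ]
  calc Metric.diam _ ≤ 2 * (δ / 2) := Metric.diam_closedBall (by linarith)
  _ = δ := by ring

noncomputable def cubeList (δ : ℝ) (z : Fin n → ℤ) : List (((Fin n → ℝ) →ₗ[ℝ] ℝ) × ℝ) :=
  (List.finRange n).flatMap fun j =>
    [(LinearMap.proj j, δ * (z j + 1)), (-LinearMap.proj j, -(δ * z j))]

lemma cube_constraints (δ : ℝ) (z : Fin n → ℤ) :
    {x : Fin n → ℝ | ∀ p ∈ cubeList δ z, p.1 x ≤ p.2} = cube δ z := by
  ext x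
  simp only [cubeList, Set.mem_setOf_eq, List.mem_flatMap, List.mem_finRange, List.mem_cons,
    List.mem_singleton, List.not_mem_nil, or_false, true_and, cube]
  constructor
  · intro h j
    have h1 := h (LinearMap.proj j, δ * (z j + 1)) ⟨j, Or.inl rfl⟩
    have h2 := h (-LinearMap.proj j, -(δ * z j)) ⟨j, Or.inr rfl⟩
    simp only [LinearMap.proj_apply, LinearMap.neg_apply] at h1 h2
    exact ⟨by linarith, h1⟩
  · rintro h p ⟨j, hp | hp⟩ <;> subst hp <;>
      simp only [LinearMap.proj_apply, LinearMap.neg_apply]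
    · exact (h j).2
    · linarith [(h j).1]

lemma cubeList_rat {q : ℚ} (z : Fin n → ℤ) :
    ∀ p ∈ cubeList (q : ℝ) z, (∀ x, RatVec x → ∃ r : ℚ, p.1 x = r) ∧ ∃ r : ℚ, p.2 = r := by
  rintro p hp
  simp only [cubeList, List.mem_flatMap, List.mem_finRange, List.mem_cons, List.mem_singleton,
    List.not_mem_nil, or_false, true_and] at hp
  obtain ⟨j, hp | hp⟩ := hp <;> subst hp
  · exact ⟨fun x hx => by simpa using hx j, ⟨q * (z j + 1), by push_cast; ring⟩⟩
  · refine ⟨fun x hx => ?_, ⟨-(q * z j), by push_cast; ring⟩⟩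
    obtain ⟨r, hr⟩ := hx j
    exact ⟨-r, by simp [hr]⟩

lemma exists_rat_piece (S : Finset (Fin n → ℝ)) (hS : ∀ x ∈ S, RatVec x) (q : ℚ)
    (z : Fin n → ℤ) :
    ∃ T : Finset (Fin n → ℝ), (∀ x ∈ T, RatVec x) ∧
      convexHull ℝ (T : Set (Fin n → ℝ)) =
        convexHull ℝ (S : Set (Fin n → ℝ)) ∩ cube (q : ℝ) z := by
  obtain ⟨T, hT, hhull⟩ := hull_inter_list S hS (cubeList (q : ℝ) z) (cubeList_rat z)
  exact ⟨T, hT, by rw [hhull, cube_constraints]⟩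

/-! ### Intrinsic interior helpers -/

lemma intrinsicInterior_ball {K : Set (Fin n → ℝ)} {p : Fin n → ℝ}
    (hp : p ∈ intrinsicInterior ℝ K) :
    p ∈ affineSpan ℝ K ∧ ∃ r > 0, ∀ y, y ∈ affineSpan ℝ K → dist y p < r → y ∈ K := by
  obtain ⟨y, hy, rfl⟩ := mem_intrinsicInterior.1 hp
  refine ⟨y.2, ?_⟩
  rw [mem_interior_iff_mem_nhds, Metric.mem_nhds_iff] at hy
  obtain ⟨r, hr, hball⟩ := hy
  refine ⟨r, hr, fun z hz hdist => ?_⟩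
  have hmem : (⟨z, hz⟩ : affineSpan ℝ K) ∈ Metric.ball y r := by
    rw [Metric.mem_ball, Subtype.dist_eq]; exact hdist
  exact hball hmem

lemma relint_flat_le {K : Set (Fin n → ℝ)} {p : Fin n → ℝ} {j : Fin n} {a : ℝ}
    (hp : p ∈ intrinsicInterior ℝ K) (hK : ∀ x ∈ K, x j ≤ a) (hpj : p j = a) :
    ∀ x ∈ K, x j = a := by
  obtain ⟨hpA, r, hr, hball⟩ := intrinsicInterior_ball hp
  intro x hx
  by_contra hne
  have hxj : x j < a := lt_of_le_of_ne (hK x hx) hne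
  have hpx : p ≠ x := fun h => hne (h ▸ hpj)
  have hd : 0 < dist p x := dist_pos.2 hpx
  set s : ℝ := r / (2 * dist p x) with hsdef
  have hs : 0 < s := div_pos hr (by linarith)
  set y : Fin n → ℝ := s • (p -ᵥ x) +ᵥ p with hydef
  have hyA : y ∈ affineSpan ℝ K :=
    AffineSubspace.smul_vsub_vadd_mem _ s hpA (subset_affineSpan ℝ K hx) hpA
  have hdy : dist y p = s * dist p x := by
    rw [hydef, dist_eq_norm]
    simp only [vadd_eq_add, vsub_eq_sub, add_sub_cancel_right]
    rw [norm_smul, Real.norm_eq_abs, abs_of_pos hs, dist_eq_norm]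
  have hdy' : dist y p < r := by
    rw [hdy, hsdef]
    rw [div_mul_eq_mul_div, mul_comm]
    rw [div_lt_iff₀ (by linarith)]
    nlinarith
  have hyK := hball y hyA hdy'
  have hyj : y j = p j + s * (p j - x j) := by
    simp [hydef, vadd_eq_add, vsub_eq_sub]
    ring
  have : a < y j := by
    rw [hyj, hpj]
    nlinarith
  linarith [hK y hyK]

lemma relint_flat_ge {K : Set (Fin n → ℝ)} {p : Fin n → ℝ} {j : Fin n} {a : ℝ}
    (hp : p ∈ intrinsicInterior ℝ K) (hK : ∀ x ∈ K, a ≤ x j) (hpj : p j = a) :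
    ∀ x ∈ K, x j = a := by
  obtain ⟨hpA, r, hr, hball⟩ := intrinsicInterior_ball hp
  intro x hx
  by_contra hne
  have hxj : a < x j := lt_of_le_of_ne (hK x hx) (Ne.symm hne)
  have hpx : p ≠ x := by intro h; rw [h] at hpj; exact hne hpj
  have hd : 0 < dist p x := dist_pos.2 hpx
  set s : ℝ := r / (2 * dist p x) with hsdef
  have hs : 0 < s := div_pos hr (by linarith)
  set y : Fin n → ℝ := s • (p -ᵥ x) +ᵥ p with hydef
  have hyA : y ∈ affineSpan ℝ K :=
    AffineSubspace.smul_vsub_vadd_mem _ s hpA (subset_affineSpan ℝ K hx) hpA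
  have hdy : dist y p = s * dist p x := by
    rw [hydef, dist_eq_norm]
    simp only [vadd_eq_add, vsub_eq_sub, add_sub_cancel_right]
    rw [norm_smul, Real.norm_eq_abs, abs_of_pos hs, dist_eq_norm]
  have hdy' : dist y p < r := by
    rw [hdy, hsdef]
    rw [div_mul_eq_mul_div, mul_comm]
    rw [div_lt_iff₀ (by linarith)]
    nlinarith
  have hyK := hball y hyA hdy'
  have hyj : y j = p j + s * (p j - x j) := by
    simp [hydef, vadd_eq_add, vsub_eq_sub]
    ring
  have : y j < a := by
    rw [hyj, hpj]
    nlinarith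
  linarith [hK y hyK]

lemma coord_const_of_eq {K : Set (Fin n → ℝ)} {j : Fin n} {a : ℝ}
    (h : ∀ x ∈ K, x j = a) : ∀ u ∈ (affineSpan ℝ K).direction, u j = 0 := by
  intro u hu
  rw [direction_affineSpan, vectorSpan_def] at hu
  have hle : Submodule.span ℝ (K -ᵥ K) ≤ LinearMap.ker (LinearMap.proj j) := by
    rw [Submodule.span_le]
    rintro v ⟨x, hx, y, hy, rfl⟩
    simp only [SetLike.mem_coe, LinearMap.mem_ker, LinearMap.proj_apply, vsub_eq_sub,
      Pi.sub_apply, h x hx, h y hy, sub_self]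
  have := hle hu
  simpa using this

lemma coord_eq_of_const {A : AffineSubspace ℝ (Fin n → ℝ)} {j : Fin n}
    (hconst : ∀ u ∈ A.direction, u j = 0) {x y : Fin n → ℝ}
    (hx : x ∈ A) (hy : y ∈ A) : y j = x j := by
  have h := hconst (y -ᵥ x) (AffineSubspace.vsub_mem_direction hy hx)
  simp only [vsub_eq_sub, Pi.sub_apply] at h
  linarith

lemma span_eq_of_ball_subset {K : Set (Fin n → ℝ)} {A : AffineSubspace ℝ (Fin n → ℝ)}
    {w : Fin n → ℝ} {ρ : ℝ} (hρ : 0 < ρ) (hKA : affineSpan ℝ K ≤ A) (hwA : w ∈ A)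
    (hball : ∀ y, y ∈ A → dist y w < ρ → y ∈ K) : affineSpan ℝ K = A := by
  refine le_antisymm hKA ?_
  have hwK : w ∈ K := hball w hwA (by simp [hρ])
  have hwS : w ∈ affineSpan ℝ K := subset_affineSpan ℝ K hwK
  have hdir : A.direction ≤ (affineSpan ℝ K).direction := by
    intro u hu
    set σ : ℝ := ρ / (2 * (‖u‖ + 1)) with hσdef
    have hσ : 0 < σ := div_pos hρ (by positivity)
    have hσu : ‖σ • u‖ < ρ := by
      rw [norm_smul, Real.norm_eq_abs, abs_of_pos hσ, hσdef]
      rw [div_mul_eq_mul_div, div_lt_iff₀ (by positivity)]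
      nlinarith [norm_nonneg u]
    have hptA : σ • u +ᵥ w ∈ A := AffineSubspace.vadd_mem_of_mem_direction
      (Submodule.smul_mem _ σ hu) hwA
    have hptK : σ • u +ᵥ w ∈ K := by
      apply hball _ hptA
      rw [dist_eq_norm]
      simpa [vadd_eq_add] using hσu
    have hvsub : (σ • u +ᵥ w) -ᵥ w ∈ (affineSpan ℝ K).direction :=
      AffineSubspace.vsub_mem_direction (subset_affineSpan ℝ K hptK) hwS
    rw [vadd_vsub] at hvsub
    have := Submodule.smul_mem _ σ⁻¹ hvsub
    rwa [smul_smul, inv_mul_cancel₀ (ne_of_gt hσ), one_smul] at this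
  intro y hy
  have : (y -ᵥ w) +ᵥ w ∈ affineSpan ℝ K :=
    AffineSubspace.vadd_mem_of_mem_direction (hdir (AffineSubspace.vsub_mem_direction hy hwA)) hwS
  rwa [vsub_vadd] at this


lemma exists_generic_near {A : AffineSubspace ℝ (Fin n → ℝ)} (x : Fin n → ℝ)
    (J : Finset (Fin n)) :
    ∀ (p : Fin n → ℝ), p ∈ A → ∀ r : ℝ, 0 < r →
    ∃ z', z' ∈ A ∧ dist z' p < r ∧
      ∀ j ∈ J, (∃ u ∈ A.direction, u j ≠ 0) → z' j ≠ x j := by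
  classical
  induction J using Finset.induction with
  | empty =>
    intro p hp r hr
    exact ⟨p, hp, by simpa using hr, by simp⟩
  | @insert j J hjJ ih =>
    intro p hp r hr
    obtain ⟨z', hz'A, hz'd, hz'⟩ := ih p hp (r / 2) (by linarith)
    by_cases hcj : ∃ u ∈ A.direction, u j ≠ 0
    swap
    · refine ⟨z', hz'A, by linarith, ?_⟩
      intro j' hj' hc
      rcases Finset.mem_insert.1 hj' with rfl | hj'
      · exact absurd hc hcj
      · exact hz' j' hj' hc
    obtain ⟨u, huA, huj⟩ := hcj
    set s₀ : ℝ := r / (4 * (‖u‖ + 1)) with hs₀def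
    have hs₀ : 0 < s₀ := by positivity
    have hinf : (Set.Ioo (0 : ℝ) s₀).Infinite := Set.Ioo_infinite hs₀
    set bad : Finset ℝ := (insert j J).image (fun j' => (x j' - z' j') / u j') with hbaddef
    obtain ⟨s, hs⟩ := (hinf.diff bad.finite_toSet).nonempty
    obtain ⟨hsIoo, hsbad⟩ := hs
    refine ⟨s • u + z', ?_, ?_, ?_⟩
    · have := AffineSubspace.vadd_mem_of_mem_direction (Submodule.smul_mem _ s huA) hz'A
      simpa [vadd_eq_add] using this
    · have h1 : dist (s • u + z') z' = s * ‖u‖ := by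
        rw [dist_eq_norm, add_sub_cancel_right, norm_smul, Real.norm_eq_abs,
          abs_of_pos hsIoo.1]
      have h2 : s * ‖u‖ < r / 2 := by
        have hs' : s < s₀ := hsIoo.2
        have : s₀ * (‖u‖ + 1) = r / 4 := by
          rw [hs₀def]; field_simp
        nlinarith [norm_nonneg u, hsIoo.1]
      calc dist (s • u + z') p ≤ dist (s • u + z') z' + dist z' p := dist_triangle _ _ _
      _ < r := by rw [h1]; linarith
    · intro j' hj' hc
      intro heq
      have hzj : z' j' + s * u j' = x j' := by
        have : (s • u + z') j' = x j' := heq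
        simp only [Pi.add_apply, Pi.smul_apply, smul_eq_mul] at this
        linarith
      by_cases hu0 : u j' = 0
      · rw [hu0, mul_zero, add_zero] at hzj
        rcases Finset.mem_insert.1 hj' with rfl | hjJ'
        · exact huj hu0
        · exact hz' j' hjJ' hc hzj
      · apply hsbad
        rw [hbaddef]
        simp only [Finset.coe_image, Set.mem_image, Finset.mem_coe]
        exact ⟨j', hj', by field_simp; linarith⟩

lemma coverage [Nonempty (Fin n)] {P : Set (Fin n → ℝ)} (hPc : Convex ℝ P)
    (hPne : P.Nonempty) {δ : ℝ} (hδ : 0 < δ) {x : Fin n → ℝ} (hx : x ∈ P) :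
    ∃ z : Fin n → ℤ, (∀ j, z j = ⌊x j / δ⌋ ∨ z j = ⌈x j / δ⌉ - 1) ∧ x ∈ cube δ z ∧
      affineSpan ℝ (P ∩ cube δ z) = affineSpan ℝ P := by
  classical
  set A := affineSpan ℝ P with hAdef
  obtain ⟨z₀, hz₀⟩ := Set.Nonempty.intrinsicInterior hPc hPne
  obtain ⟨hz₀A, r, hr, hball⟩ := intrinsicInterior_ball hz₀
  obtain ⟨z', hz'A, hz'd, hz'gen⟩ := exists_generic_near x Finset.univ z₀ hz₀A (r / 2)
    (by linarith)
  have hballz' : ∀ y, y ∈ A → dist y z' < r / 2 → y ∈ P := by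
    intro y hy hd
    apply hball y hy
    calc dist y z₀ ≤ dist y z' + dist z' z₀ := dist_triangle _ _ _
    _ < r := by linarith
  have hxA : x ∈ A := subset_affineSpan ℝ P hx
  set z : Fin n → ℤ := fun j => if x j ≤ z' j then ⌊x j / δ⌋ else ⌈x j / δ⌉ - 1 with hzdef
  have hzor : ∀ j, z j = ⌊x j / δ⌋ ∨ z j = ⌈x j / δ⌉ - 1 := by
    intro j; by_cases h : x j ≤ z' j <;> simp [hzdef, h]
  -- x lies in the cube
  have hfloor_le : ∀ j, (⌊x j / δ⌋ : ℝ) * δ ≤ x j := by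
    intro j
    have h := Int.floor_le (x j / δ)
    calc (⌊x j / δ⌋ : ℝ) * δ ≤ x j / δ * δ := by nlinarith
    _ = x j := div_mul_cancel₀ _ (ne_of_gt hδ)
  have hfloor_lt : ∀ j, x j < ((⌊x j / δ⌋ : ℝ) + 1) * δ := by
    intro j
    have h := Int.lt_floor_add_one (x j / δ)
    have h2 : x j / δ * δ = x j := div_mul_cancel₀ _ (ne_of_gt hδ)
    nlinarith
  have hceil_ge : ∀ j, x j ≤ (⌈x j / δ⌉ : ℝ) * δ := by
    intro j
    have h := Int.le_ceil (x j / δ)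
    have h2 : x j / δ * δ = x j := div_mul_cancel₀ _ (ne_of_gt hδ)
    nlinarith
  have hceil_gt : ∀ j, ((⌈x j / δ⌉ : ℝ) - 1) * δ < x j := by
    intro j
    have h := Int.ceil_lt_add_one (x j / δ)
    have h2 : x j / δ * δ = x j := div_mul_cancel₀ _ (ne_of_gt hδ)
    nlinarith
  have hxcube : x ∈ cube δ z := by
    intro j
    rcases hzor j with h | h <;> rw [h] <;> constructor
    · linarith [hfloor_le j]
    · push_cast; linarith [hfloor_lt j]
    · push_cast; linarith [hceil_gt j]
    · push_cast; linarith [hceil_ge j]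
  refine ⟨z, hzor, hxcube, ?_⟩
  -- margins
  have hmargin_hi : ∀ j, x j < z' j → x j + 2 * ((δ * (z j + 1) - x j) / 2) = δ * (z j + 1) := by
    intro j _; ring
  -- choose t
  have hUne : (Finset.univ : Finset (Fin n)).Nonempty := Finset.univ_nonempty
  set g : Fin n → ℝ := fun j =>
    if x j < z' j then (δ * (z j + 1) - x j) / (2 * (z' j - x j))
    else if z' j < x j then (x j - δ * z j) / (2 * (x j - z' j))
    else 1 with hgdef
  have hg_pos : ∀ j, 0 < g j := by
    intro j
    rw [hgdef]
    by_cases h1 : x j < z' j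
    · simp only [if_pos h1]
      have hub : x j < δ * (z j + 1) := by
        have : z j = ⌊x j / δ⌋ := by rw [hzdef]; simp [le_of_lt h1]
        rw [this]; push_cast; linarith [hfloor_lt j]
      apply div_pos <;> linarith
    · simp only [if_neg h1]
      by_cases h2 : z' j < x j
      · simp only [if_pos h2]
        have hlb : δ * z j < x j := by
          have : z j = ⌈x j / δ⌉ - 1 := by rw [hzdef]; simp [not_le.1 (by linarith : ¬ x j ≤ z' j)]
          rw [this]; push_cast; linarith [hceil_gt j]
        apply div_pos <;> linarith
      · simp only [if_neg h2]; norm_num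
  set t : ℝ := min 1 (Finset.univ.inf' hUne g) with htdef
  have ht0 : 0 < t := lt_min one_pos ((Finset.lt_inf'_iff _).2 (fun j _ => hg_pos j))
  have ht1 : t ≤ 1 := min_le_left _ _
  have htg : ∀ j, t ≤ g j := fun j => le_trans (min_le_right _ _)
    (Finset.inf'_le _ (Finset.mem_univ j))
  -- choose ρ
  set ρ : ℝ := min (t * (r / 2)) (Finset.univ.inf' hUne
    (fun j => if z' j = x j then 1 else t * |z' j - x j|)) with hρdef
  have hρ0 : 0 < ρ := by
    apply lt_min (by positivity)
    apply (Finset.lt_inf'_iff _).2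
    intro j _
    by_cases h : z' j = x j
    · simp [h]
    · simp only [if_neg h]
      have : 0 < |z' j - x j| := abs_pos.2 (sub_ne_zero.2 h)
      positivity
  have hρr : ρ ≤ t * (r / 2) := min_le_left _ _
  have hρj : ∀ j, z' j ≠ x j → ρ ≤ t * |z' j - x j| := by
    intro j hne
    refine le_trans (min_le_right _ _) ?_
    have := Finset.inf'_le (fun j => if z' j = x j then 1 else t * |z' j - x j|)
      (Finset.mem_univ j)
    rwa [if_neg hne] at this
  set w : Fin n → ℝ := t • (z' - x) + x with hwdef
  have hwA : w ∈ A := by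
    have := AffineSubspace.smul_vsub_vadd_mem A t hz'A hxA hxA
    simpa [vsub_eq_sub, vadd_eq_add] using this
  -- the ball around w inside A is contained in the piece
  apply span_eq_of_ball_subset hρ0 (affineSpan_mono ℝ Set.inter_subset_left) hwA
  intro y hyA hdy
  have hcoord : ∀ j, |y j - w j| < ρ := by
    intro j
    have h1 := dist_le_pi_dist y w j
    have h2 : dist (y j) (w j) = |y j - w j| := Real.dist_eq _ _
    rw [dist_comm] at hdy
    rw [← h2]
    calc dist (y j) (w j) ≤ dist y w := h1
    _ < ρ := by rwa [dist_comm] at hdy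
  constructor
  · -- y ∈ P
    set z'' : Fin n → ℝ := t⁻¹ • (y - w) + z' with hz''def
    have hz''A : z'' ∈ A := by
      have := AffineSubspace.smul_vsub_vadd_mem A t⁻¹ hyA hwA hz'A
      simpa [vsub_eq_sub, vadd_eq_add] using this
    have hz''d : dist z'' z' < r / 2 := by
      have h1 : dist z'' z' = t⁻¹ * dist y w := by
        rw [hz''def, dist_eq_norm, add_sub_cancel_right, norm_smul, Real.norm_eq_abs,
          abs_of_pos (inv_pos.2 ht0), dist_eq_norm]
      rw [h1]
      calc t⁻¹ * dist y w < t⁻¹ * (t * (r / 2)) :=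
        mul_lt_mul_of_pos_left (lt_of_lt_of_le hdy hρr) (inv_pos.2 ht0)
      _ = r / 2 := by field_simp
    have hz''P : z'' ∈ P := hballz' z'' hz''A hz''d
    have hyy : y = (1 - t) • x + t • z'' := by
      rw [hz''def, hwdef]
      rw [smul_add, smul_smul, mul_inv_cancel₀ (ne_of_gt ht0), one_smul]
      module
    rw [hyy]
    exact hPc hx hz''P (by linarith) (le_of_lt ht0) (by ring)
  · -- y ∈ cube
    intro j
    have hwj : w j = x j + t * (z' j - x j) := by
      simp [hwdef]; ring
    have habs := hcoord j
    rcases lt_trichotomy (x j) (z' j) with hlt | heq | hgt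
    · have hzj : z j = ⌊x j / δ⌋ := by rw [hzdef]; simp [le_of_lt hlt]
      have hρle : ρ ≤ t * (z' j - x j) := by
        have := hρj j (by intro h; rw [h] at hlt; exact lt_irrefl _ hlt)
        rwa [abs_of_pos (by linarith)] at this
      have hΔ : 0 < z' j - x j := by linarith
      have hgj : t * (z' j - x j) ≤ (δ * (z j + 1) - x j) / 2 := by
        have h1 := htg j
        rw [hgdef] at h1
        simp only [if_pos hlt] at h1
        calc t * (z' j - x j)
            ≤ ((δ * (z j + 1) - x j) / (2 * (z' j - x j))) * (z' j - x j) := by nlinarith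
        _ = (δ * (z j + 1) - x j) / 2 := by field_simp
      rw [abs_lt] at habs
      rw [hwj] at habs
      have hlb : δ * z j ≤ x j := by rw [hzj]; linarith [hfloor_le j]
      constructor
      · linarith
      · linarith
    · -- constant coordinate
      have hconst : ∀ u ∈ A.direction, u j = 0 := by
        intro u hu
        by_contra hu0
        exact (hz'gen j (Finset.mem_univ j) ⟨u, hu, hu0⟩) heq.symm
      have hyj : y j = x j := coord_eq_of_const hconst hxA hyA
      rw [hyj]
      exact hxcube j
    · have hzj : z j = ⌈x j / δ⌉ - 1 := by rw [hzdef]; simp [not_le.2 hgt]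
      have hρle : ρ ≤ t * (x j - z' j) := by
        have := hρj j (by intro h; rw [h] at hgt; exact lt_irrefl _ hgt)
        rwa [abs_of_neg (by linarith), neg_sub] at this
      have hΔ : 0 < x j - z' j := by linarith
      have hgj : t * (x j - z' j) ≤ (x j - δ * z j) / 2 := by
        have h1 := htg j
        rw [hgdef] at h1
        simp only [if_neg (by linarith : ¬ x j < z' j), if_pos hgt] at h1
        calc t * (x j - z' j)
            ≤ ((x j - δ * z j) / (2 * (x j - z' j))) * (x j - z' j) := by nlinarith
        _ = (x j - δ * z j) / 2 := by field_simp
      rw [abs_lt] at habs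
      rw [hwj] at habs
      have hub : x j ≤ δ * (z j + 1) := by rw [hzj]; push_cast; linarith [hceil_ge j]
      constructor
      · linarith
      · linarith

lemma pieces_eq_of_relint_inter {P : Set (Fin n → ℝ)} {δ : ℝ} (hδ : 0 < δ)
    {z z' : Fin n → ℤ}
    (hsz : affineSpan ℝ (P ∩ cube δ z) = affineSpan ℝ P)
    (hsz' : affineSpan ℝ (P ∩ cube δ z') = affineSpan ℝ P)
    {p : Fin n → ℝ} (hp : p ∈ intrinsicInterior ℝ (P ∩ cube δ z))
    (hp' : p ∈ intrinsicInterior ℝ (P ∩ cube δ z')) :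
    P ∩ cube δ z = P ∩ cube δ z' := by
  have hpK : p ∈ P ∩ cube δ z := intrinsicInterior_subset hp
  have hpK' : p ∈ P ∩ cube δ z' := intrinsicInterior_subset hp'
  have hpA : p ∈ affineSpan ℝ P := subset_affineSpan ℝ P hpK.1
  have key : ∀ j, z j ≠ z' j → ∀ u ∈ (affineSpan ℝ P).direction, u j = 0 := by
    intro j hne
    rcases lt_or_gt_of_ne hne with hlt | hgt
    · -- z j < z' j ; so z' j = z j + 1 and p j = δ * (z j + 1)
      have h1 : p j ≤ δ * (z j + 1) := (hpK.2 j).2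
      have h2 : δ * z' j ≤ p j := (hpK'.2 j).1
      have hz1 : (z j : ℝ) + 1 ≤ (z' j : ℝ) := by exact_mod_cast hlt
      have hpj : p j = δ * (z j + 1) := by nlinarith
      have hflat : ∀ x ∈ P ∩ cube δ z, x j = δ * (z j + 1) :=
        relint_flat_le hp (fun x hx => (hx.2 j).2) hpj
      have hconst := coord_const_of_eq hflat
      rwa [hsz] at hconst
    · have h1 : δ * z j ≤ p j := (hpK.2 j).1
      have h2 : p j ≤ δ * (z' j + 1) := (hpK'.2 j).2
      have hz1 : (z' j : ℝ) + 1 ≤ (z j : ℝ) := by exact_mod_cast hgt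
      have hpj : p j = δ * z j := by nlinarith
      have hflat : ∀ x ∈ P ∩ cube δ z, x j = δ * z j :=
        relint_flat_ge hp (fun x hx => (hx.2 j).1) hpj
      have hconst := coord_const_of_eq hflat
      rwa [hsz] at hconst
  ext x
  constructor
  · rintro ⟨hxP, hxc⟩
    refine ⟨hxP, fun j => ?_⟩
    by_cases hzz : z j = z' j
    · rw [← hzz]; exact hxc j
    · have hxj : x j = p j :=
        coord_eq_of_const (key j hzz) hpA (subset_affineSpan ℝ P hxP)
      rw [hxj]
      exact hpK'.2 j
  · rintro ⟨hxP, hxc⟩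
    refine ⟨hxP, fun j => ?_⟩
    by_cases hzz : z j = z' j
    · rw [hzz]; exact hxc j
    · have hxj : x j = p j :=
        coord_eq_of_const (key j hzz) hpA (subset_affineSpan ℝ P hxP)
      rw [hxj]
      exact hpK.2 j

lemma isRatPolytope_of_finset {P : Set (Fin n → ℝ)} (T : Finset (Fin n → ℝ))
    (hT : ∀ x ∈ T, RatVec x) (h : P = convexHull ℝ (T : Set (Fin n → ℝ))) :
    IsRatPolytope P := by
  classical
  refine ⟨T.card, fun i => (T.equivFin.symm i : Fin n → ℝ), ?_, ?_⟩
  · intro i j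
    exact hT _ (T.equivFin.symm i).2 j
  · rw [h]
    congr 1
    ext y
    simp only [Set.mem_range, Finset.mem_coe]
    constructor
    · intro hy
      exact ⟨T.equivFin ⟨y, hy⟩, by simp⟩
    · rintro ⟨i, rfl⟩
      exact (T.equivFin.symm i).2
end RatCut

/-- Given `ε > 0`, every rational polytope `P` in `ℝⁿ` is a finite union of rational
polytopes of the same dimension as `P`, each of diameter at most `ε`, with pairwise
disjoint relative interiors. -/
theorem ratPolytope_decomposition (n : ℕ) (P : Set (Fin n → ℝ))
    (hP : IsRatPolytope P) (ε : ℝ) (hε : 0 < ε) :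
    ∃ (m : ℕ) (Q : Fin m → Set (Fin n → ℝ)),
      (∀ i, IsRatPolytope (Q i)) ∧
      P = ⋃ i, Q i ∧
      (∀ i, Module.finrank ℝ (affineSpan ℝ (Q i)).direction =
        Module.finrank ℝ (affineSpan ℝ P).direction) ∧
      (∀ i, Metric.diam (Q i) ≤ ε) ∧
      (∀ i j, i ≠ j →
        Disjoint (intrinsicInterior ℝ (Q i)) (intrinsicInterior ℝ (Q j))) := by
  classical
  open RatCut in
  obtain ⟨k, v, hvrat, hPhull⟩ := hP
  set S : Finset (Fin n → ℝ) := Finset.image v Finset.univ with hSdef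
  have hScoe : (S : Set (Fin n → ℝ)) = Set.range v := by
    rw [hSdef, Finset.coe_image, Finset.coe_univ, Set.image_univ]
  have hPS : P = convexHull ℝ (S : Set (Fin n → ℝ)) := by rw [hPhull, hScoe]
  have hSrat : ∀ x ∈ S, RatVec x := by
    intro x hx
    rw [hSdef] at hx
    obtain ⟨i, _, rfl⟩ := Finset.mem_image.1 hx
    exact fun j => hvrat i j
  by_cases hSne : S.Nonempty
  swap
  · refine ⟨0, fun i => i.elim0, fun i => i.elim0, ?_, fun i => i.elim0, fun i => i.elim0,
      fun i => i.elim0⟩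
    rw [hPS, Finset.not_nonempty_iff_eq_empty.1 hSne]
    simp
  have hPc : Convex ℝ P := hPS ▸ convex_convexHull ℝ _
  have hPne : P.Nonempty := by
    obtain ⟨s₀, hs₀⟩ := hSne
    exact ⟨s₀, hPS ▸ subset_convexHull ℝ _ hs₀⟩
  rcases Nat.eq_zero_or_pos n with hn | hn
  · subst hn
    have hsub : P.Subsingleton := fun a _ b _ => funext fun j => j.elim0
    refine ⟨1, fun _ => P, fun _ => ⟨k, v, hvrat, hPhull⟩, (Set.iUnion_const P).symm,
      fun _ => rfl, fun _ => ?_, fun i j hij => absurd (Subsingleton.elim i j) hij⟩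
    rw [Metric.diam_subsingleton hsub]
    linarith
  have hfinne : Nonempty (Fin n) := Fin.pos_iff_nonempty.1 hn
  obtain ⟨q, hq0, hqε⟩ := exists_rat_btwn hε
  have hδ : (0 : ℝ) < q := hq0
  set M : ℝ := S.sup' hSne (fun v => ‖v‖) with hMdef
  have hMb : ∀ y ∈ P, ∀ j, |y j| ≤ M := by
    intro y hy j
    have hsub : P ⊆ Metric.closedBall 0 M := by
      rw [hPS]
      refine convexHull_min ?_ (convex_closedBall 0 M)
      intro u hu
      rw [mem_closedBall_zero_iff]
      exact Finset.le_sup' _ hu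
    have := mem_closedBall_zero_iff.1 (hsub hy)
    calc |y j| = ‖y j‖ := rfl
    _ ≤ ‖y‖ := norm_le_pi_norm y j
    _ ≤ M := this
  set B : ℤ := ⌈M / (q : ℝ)⌉ + 1 with hBdef
  set Zbox : Finset (Fin n → ℤ) := Finset.Icc (fun _ => -B) (fun _ => B) with hZdef
  set K : (Fin n → ℤ) → Set (Fin n → ℝ) := fun z => P ∩ cube (q : ℝ) z with hKdef
  set Zgood : Finset (Fin n → ℤ) :=
    Zbox.filter (fun z => affineSpan ℝ (K z) = affineSpan ℝ P) with hZgdef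
  set 𝒬 : Finset (Set (Fin n → ℝ)) := Zgood.image K with h𝒬def
  have hQmem : ∀ i : Fin 𝒬.card, ∃ z ∈ Zgood, K z = (𝒬.equivFin.symm i : Set (Fin n → ℝ)) := by
    intro i
    exact Finset.mem_image.1 (𝒬.equivFin.symm i).2
  refine ⟨𝒬.card, fun i => (𝒬.equivFin.symm i : Set (Fin n → ℝ)), ?_, ?_, ?_, ?_, ?_⟩
  · -- rational polytopes
    intro i
    obtain ⟨z, hz, hKz⟩ := hQmem i
    obtain ⟨T, hTrat, hThull⟩ := exists_rat_piece S hSrat q z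
    refine isRatPolytope_of_finset T hTrat ?_
    show (𝒬.equivFin.symm i : Set (Fin n → ℝ)) = _
    rw [← hKz]
    show P ∩ cube (q : ℝ) z = _
    rw [hThull, hPS]
  · -- union
    ext x
    simp only [Set.mem_iUnion]
    constructor
    · intro hx
      obtain ⟨z, hzor, hxz, hspan⟩ := coverage hPc hPne hδ hx
      have hzbox : z ∈ Zbox := by
        rw [hZdef, Finset.mem_Icc]
        have hb : ∀ j, -B ≤ z j ∧ z j ≤ B := by
          intro j
          have hxj := abs_le.1 (hMb x hx j)
          have hxj2 : x j ≤ M := hxj.2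
          have hxj1 : -M ≤ x j := hxj.1
          have hup : x j / (q : ℝ) ≤ M / (q : ℝ) := by gcongr
          have hlow : -(M / (q : ℝ)) ≤ x j / (q : ℝ) := by
            rw [← neg_div]
            gcongr
          have h1 : ⌈x j / (q : ℝ)⌉ ≤ ⌈M / (q : ℝ)⌉ := Int.ceil_le_ceil hup
          have h2 : ⌊-(M / (q : ℝ))⌋ ≤ ⌊x j / (q : ℝ)⌋ := Int.floor_le_floor hlow
          rw [Int.floor_neg] at h2
          have h3 := Int.floor_le_ceil (x j / (q : ℝ))
          rcases hzor j with h | h <;> rw [h, hBdef] <;> omega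
        exact ⟨fun j => (hb j).1, fun j => (hb j).2⟩
      have hzgood : z ∈ Zgood := by
        rw [hZgdef, Finset.mem_filter]
        exact ⟨hzbox, hspan⟩
      have hKmem : K z ∈ 𝒬 := by
        rw [h𝒬def]
        exact Finset.mem_image_of_mem K hzgood
      refine ⟨𝒬.equivFin ⟨K z, hKmem⟩, ?_⟩
      rw [Equiv.symm_apply_apply]
      exact ⟨hx, hxz⟩
    · rintro ⟨i, hx⟩
      obtain ⟨z, hz, hKz⟩ := hQmem i
      have hx' : x ∈ K z := by rw [hKz]; exact hx
      exact hx'.1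
  · -- dimensions
    intro i
    obtain ⟨z, hz, hKz⟩ := hQmem i
    have hsp := (Finset.mem_filter.1 hz).2
    show Module.finrank ℝ (affineSpan ℝ (𝒬.equivFin.symm i : Set (Fin n → ℝ))).direction = _
    rw [← hKz, hsp]
  · -- diameter
    intro i
    obtain ⟨z, hz, hKz⟩ := hQmem i
    have hsub : (𝒬.equivFin.symm i : Set (Fin n → ℝ)) ⊆ cube (q : ℝ) z := by
      rw [← hKz]; exact Set.inter_subset_right
    have hb : Bornology.IsBounded (cube (q : ℝ) z) := by
      rw [cube_eq_closedBall hδ]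
      exact Metric.isBounded_closedBall
    calc Metric.diam _ ≤ Metric.diam (cube (q : ℝ) z) := Metric.diam_mono hsub hb
    _ ≤ (q : ℝ) := diam_cube hδ z
    _ ≤ ε := le_of_lt hqε
  · -- disjointness
    intro i j hij
    obtain ⟨z, hz, hKz⟩ := hQmem i
    obtain ⟨z', hz', hKz'⟩ := hQmem j
    rw [Set.disjoint_left]
    intro p hpi hpj
    have hpi' : p ∈ intrinsicInterior ℝ (K z) := by rw [hKz]; exact hpi
    have hpj' : p ∈ intrinsicInterior ℝ (K z') := by rw [hKz']; exact hpj
    have heq : K z = K z' :=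
      pieces_eq_of_relint_inter hδ (Finset.mem_filter.1 hz).2 (Finset.mem_filter.1 hz').2 hpi' hpj'
    apply hij
    have : (𝒬.equivFin.symm i : Set (Fin n → ℝ)) = (𝒬.equivFin.symm j : Set (Fin n → ℝ)) := by
      rw [← hKz, ← hKz', heq]
    have h2 : 𝒬.equivFin.symm i = 𝒬.equivFin.symm j := Subtype.ext this
    exact 𝒬.equivFin.symm.injective h2
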